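/- In R = ℤ[w,z]/(w² - 2w, wz - 2w), for any k ≥ 0, k((z^k)) = k, where k(I) = min{m ≥ 0 : ∃x ∈ I, wx = 2^m·w}. -/

import Mathlib

/-!
Evaluating `w` and `z` at `2` gives a ring map `evalTwo : R → ℤ`, and
`w` is an eigenvector of every multiplication: `w * x = evalTwo x • w`, because both relations
say exactly this for the generators. Since `n • w = 0` forces `n = 0`, the condition
`w * x = 2 ^ m * w` just says `evalTwo x = 2 ^ m`. The image of `(z ^ k)` under `evalTwo` is
`(2 ^ k)`, and `2 ^ m ∈ (2 ^ k)` iff `k ≤ m`.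
-/

open MvPolynomial

noncomputable def SWFIdeal : Ideal (MvPolynomial (Fin 2) ℤ) :=
  Ideal.span {(X 0 : MvPolynomial (Fin 2) ℤ) ^ 2 - 2 * X 0,
    (X 0 : MvPolynomial (Fin 2) ℤ) * X 1 - 2 * X 0}

abbrev SWFRing : Type := MvPolynomial (Fin 2) ℤ ⧸ SWFIdeal

noncomputable def w : SWFRing := Ideal.Quotient.mk SWFIdeal (X 0)
noncomputable def z : SWFRing := Ideal.Quotient.mk SWFIdeal (X 1)

/-- `k(I) = min {m ≥ 0 : ∃ x ∈ I, wx = 2^m·w}`. -/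
noncomputable def kIdeal (I : Ideal SWFRing) : ℕ :=
  sInf {m : ℕ | ∃ x ∈ I, w * x = 2 ^ m * w}

noncomputable def evalTwo : SWFRing →+* ℤ :=
  Ideal.Quotient.lift SWFIdeal (eval fun _ => 2) fun _ ha => by
    refine (Ideal.span_le (I := RingHom.ker _)).2 ?_ ha
    simp [Set.insert_subset_iff]

@[simp]
lemma evalTwo_mk (p : MvPolynomial (Fin 2) ℤ) :
    evalTwo (Ideal.Quotient.mk SWFIdeal p) = eval (fun _ => 2) p :=
  rfl

lemma evalTwo_surjective : Function.Surjective evalTwo :=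
  fun n => ⟨n, map_intCast evalTwo n⟩

lemma w_mul_X (i : Fin 2) : w * Ideal.Quotient.mk SWFIdeal (X i) = 2 * w := by
  have hrel : X 0 * X i - 2 * X 0 ∈ SWFIdeal := by
    refine Ideal.subset_span ?_
    fin_cases i <;> simp [sq]
  simpa [w, sub_eq_zero, map_ofNat] using Ideal.Quotient.eq_zero_iff_mem.2 hrel

lemma w_mul (x : SWFRing) : w * x = evalTwo x * w := by
  obtain ⟨p, rfl⟩ := Ideal.Quotient.mk_surjective x
  induction p using MvPolynomial.induction_on with
  | C a => simp [mul_comm]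
  | add p q hp hq => simp only [map_add, mul_add, hp, hq, Int.cast_add, add_mul]
  | mul_X p i hp =>
    rw [map_mul, ← mul_assoc, hp, mul_assoc, w_mul_X]
    simp only [evalTwo_mk, map_mul, eval_X, Int.cast_mul, Int.cast_ofNat]
    ring

lemma intCast_mul_w_inj {a b : ℤ} : (a : SWFRing) * w = b * w ↔ a = b := by
  refine ⟨fun h => ?_, fun h => h ▸ rfl⟩
  simpa [w] using congrArg evalTwo h

lemma w_mul_eq_two_pow_mul_w_iff (x : SWFRing) (m : ℕ) :
    w * x = 2 ^ m * w ↔ evalTwo x = 2 ^ m := by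
  rw [w_mul, ← intCast_mul_w_inj (b := 2 ^ m)]
  push_cast
  exact Iff.rfl

lemma kIdeal_eq_sInf_two_pow_mem_map (I : Ideal SWFRing) :
    kIdeal I = sInf {m : ℕ | (2 : ℤ) ^ m ∈ I.map evalTwo} := by
  simp only [kIdeal, w_mul_eq_two_pow_mul_w_iff,
    Ideal.mem_map_iff_of_surjective _ evalTwo_surjective]

lemma map_evalTwo_span_z_pow (k : ℕ) :
    (Ideal.span {z ^ k}).map evalTwo = Ideal.span {2 ^ k} := by
  simp [Ideal.map_span, z]

/-- For any `k ≥ 0`, `k((z^k)) = k`. -/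
theorem stmt_11 (k : ℕ) : kIdeal (Ideal.span {z ^ k}) = k := by
  have hmem (m : ℕ) : (2 : ℤ) ^ m ∈ Ideal.span {2 ^ k} ↔ k ≤ m := by
    rw [Ideal.mem_span_singleton, pow_dvd_pow_iff two_ne_zero (by decide)]
  simp only [kIdeal_eq_sInf_two_pow_mem_map, map_evalTwo_span_z_pow, hmem]
  exact csInf_Ici
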